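/- arXiv:2510.09373 — 10 statements merged into one kernel-verified Lean document; each statement's English description precedes it below -/
import Mathlib

section
/- Let s be a duplicate-free list of nodes whose first element is α and whose last element is ω, and let N̂ be a set of NotBetween triples such that every (v1, v2, v3) ∈ N̂ satisfies v1 ≺_s v3 and such that s itself violates no triple of N̂. Then D_S(s) ∩ D_N(N̂) equals the set of sequences S ∈ P such that s is a subsequence of S and, for every element v of S that does not occur in s, the pair (prev(v, s, S), v) does not belong to the forbidden-insertion set F(s, N̂). -/
variable {V : Type*}

/-- `a` directly-or-later precedes `b` in `s`: `[a, b]` is a sublist of `s`. -/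
def prec (a b : V) (s : List V) : Prop := [a, b].Sublist s

/-- `a ⪯_s b`: `a = b` or `a ≺_s b`. -/
def preceq (a b : V) (s : List V) : Prop := a = b ∨ prec a b s

/-- `S` violates the NotBetween triple `(v1, v2, v3)`. -/
def violates (S : List V) (t : V × V × V) : Prop := [t.1, t.2.1, t.2.2].Sublist S

/-- A sequence: duplicate-free list with first element `α` and last element `ω`. -/
def IsSeq (a w : V) (S : List V) : Prop :=
  S.Nodup ∧ S.head? = some a ∧ S.getLast? = some w

/-- The set of all sequences from `α` to `ω`. -/
def seqP (a w : V) : Set (List V) := {S | IsSeq a w S}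

/-- Subsequence subdomain. -/
def DS (a w : V) (s : List V) : Set (List V) := {S ∈ seqP a w | s.Sublist S}

/-- NotBetween subdomain. -/
def DN (a w : V) (N : Set (V × V × V)) : Set (List V) :=
  {S ∈ seqP a w | ∀ t ∈ N, ¬ violates S t}

/-- Forbidden insertions `F(s, N̂)`. -/
def Forb (s : List V) (N : Set (V × V × V)) : Set (V × V) :=
  {p | ∃ t ∈ N, t.2.1 = p.2 ∧ preceq t.1 p.1 s ∧ prec p.1 t.2.2 s}

/-- The prefix of `S` strictly before `v`, filtered to elements of `s`. -/
def prevList [DecidableEq V] (v : V) (s S : List V) : List V :=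
  (S.takeWhile (· ≠ v)).filter (· ∈ s)

/-- `prev(v, s, S)`: `v` itself if `v` occurs in `s`, otherwise the last element of `s`
occurring before `v` in `S`. -/
def prev [DecidableEq V] (v : V) (s S : List V) : V :=
  if v ∈ s then v else (prevList v s S).getLastD v

/-!
Since `s` is a subsequence of the duplicate-free `S`, the order `≺_s` is the restriction of
`≺_S` to `s`. A triple `(v1, v2, v3)` of `N` has `v1, v3 ∈ s`; if also `v2 ∈ s`, then `S`
violates it iff `s` does, which is excluded. If `v2 ∉ s`, then `v2` lies in `S` strictly between
`p = prev(v2, s, S)` and every element of `s` after `p`, so `[v1, v2, v3]` is a sublist of `S`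
iff `v1 ⪯_s p ≺_s v3`, i.e. iff `(p, v2)` is a forbidden insertion.
-/

section Precedence

variable {x y z : V} {l : List V}

lemma mem_of_prec_left (h : prec x y l) : x ∈ l :=
  List.Sublist.subset h (by simp)

lemma mem_of_prec_right (h : prec x y l) : y ∈ l :=
  List.Sublist.subset h (by simp)

lemma prec_irrefl (hl : l.Nodup) : ¬ prec x x l := fun h =>
  hl.forall_sublist h rfl

lemma triple_sublist_of_prec (hl : l.Nodup) (hxy : prec x y l) (hyz : prec y z l) :
    [x, y, z].Sublist l := by
  induction l with
  | nil => exact absurd (mem_of_prec_left hxy) List.not_mem_nil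
  | cons a t ih =>
    have ha := (List.nodup_cons.mp hl).1
    cases hxy with
    | cons _ hxy =>
      cases hyz with
      | cons _ hyz => exact (ih (List.nodup_cons.mp hl).2 hxy hyz).cons a
      | cons_cons _ _ => exact absurd (mem_of_prec_right hxy) ha
    | cons_cons _ hxy =>
      cases hyz with
      | cons _ hyz => exact hyz.cons_cons x
      | cons_cons _ _ => exact absurd (List.singleton_sublist.mp hxy) ha

lemma prec_trans (hl : l.Nodup) (hxy : prec x y l) (hyz : prec y z l) : prec x z l :=
  List.Sublist.trans (by simp) (triple_sublist_of_prec hl hxy hyz)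

lemma prec_asymm (hl : l.Nodup) (hxy : prec x y l) : ¬ prec y x l := fun hyx =>
  prec_irrefl hl (prec_trans hl hxy hyx)

lemma prec_total (hx : x ∈ l) (hy : y ∈ l) (hxy : x ≠ y) : prec x y l ∨ prec y x l := by
  induction l with
  | nil => simp at hx
  | cons a t ih =>
    rcases List.mem_cons.mp hx with rfl | hxt
    · exact Or.inl (List.Sublist.cons_cons x (List.singleton_sublist.mpr
        ((List.mem_cons.mp hy).resolve_left hxy.symm)))
    rcases List.mem_cons.mp hy with rfl | hyt
    · exact Or.inr (List.Sublist.cons_cons y (List.singleton_sublist.mpr hxt))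
    exact (ih hxt hyt).imp (List.Sublist.cons a) (List.Sublist.cons a)

lemma preceq_prec_trans (hl : l.Nodup) (hxy : preceq x y l) (hyz : prec y z l) : prec x z l :=
  hxy.elim (fun h => h ▸ hyz) (prec_trans hl · hyz)

lemma preceq_of_sublist {s : List V} (hxy : preceq x y s) (hsl : s.Sublist l) : preceq x y l :=
  hxy.imp_right (List.Sublist.trans · hsl)

lemma prec_of_sublist_of_mem {s : List V} (hsl : s.Sublist l) (hl : l.Nodup) (hx : x ∈ s)
    (hy : y ∈ s) (hxy : prec x y l) : prec x y s := by
  have hne : x ≠ y := by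
    rintro rfl
    exact prec_irrefl hl hxy
  exact (prec_total hx hy hne).resolve_right fun hyx => prec_asymm hl hxy (hyx.trans hsl)

lemma preceq_getLastD (hz : z ∈ l) (d : V) : preceq z (l.getLastD d) l := by
  obtain ⟨L, b, rfl⟩ := (List.eq_nil_or_concat l).resolve_left (List.ne_nil_of_mem hz)
  rw [List.concat_eq_append] at hz ⊢
  rw [List.getLastD_concat]
  rcases List.mem_append.mp hz with hz | hz
  · exact Or.inr (List.Sublist.append (List.singleton_sublist.mpr hz) (List.Sublist.refl [b]))
  · exact Or.inl (List.mem_singleton.mp hz)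

end Precedence

section Prev

variable [DecidableEq V] {v z : V} {s S : List V}

lemma prevList_sublist : (prevList v s S).Sublist S :=
  List.filter_sublist.trans (List.takeWhile_sublist _)

lemma mem_prevList_iff (hS : S.Nodup) (hv : v ∈ S) :
    z ∈ prevList v s S ↔ z ∈ s ∧ prec z v S := by
  obtain ⟨T, R, rfl⟩ := List.append_of_mem hv
  have hvT : v ∉ T := fun h => (List.nodup_append'.mp hS).2.2 h List.mem_cons_self
  have htake : (T ++ v :: R).takeWhile (· ≠ v) = T := by
    rw [List.takeWhile_append_of_pos fun a ha => decide_eq_true (ne_of_mem_of_not_mem ha hvT)]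
    simp
  suffices z ∈ T ↔ prec z v (T ++ v :: R) by
    simp only [prevList, htake, List.mem_filter, decide_eq_true_iff, this, and_comm]
  refine ⟨fun hz => List.Sublist.append (List.singleton_sublist.mpr hz) (by simp),
    fun hzv => ?_⟩
  rcases List.mem_append.mp (mem_of_prec_left hzv) with hz | hz
  · exact hz
  rcases List.mem_cons.mp hz with rfl | hz
  · exact absurd hzv (prec_irrefl hS)
  · exact absurd hzv (prec_asymm hS
      (List.Sublist.trans (List.Sublist.cons_cons v (by simpa using hz)) (by simp)))

lemma prev_mem_prevList (hvs : v ∉ s) (h : prevList v s S ≠ []) :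
    prev v s S ∈ prevList v s S := by
  obtain ⟨z, hz⟩ := List.exists_mem_of_ne_nil _ h
  rw [prev, if_neg hvs]
  rcases preceq_getLastD hz v with heq | hlt
  · exact heq ▸ hz
  · exact mem_of_prec_right hlt

lemma preceq_prev (hvs : v ∉ s) (hz : z ∈ prevList v s S) : preceq z (prev v s S) S := by
  rw [prev, if_neg hvs]
  exact preceq_of_sublist (preceq_getLastD hz v) prevList_sublist

end Prev

section Encoding

variable [DecidableEq V] {s S : List V} {N : Set (V × V × V)}

lemma prev_notMem_forb_of_not_violates (hS : S.Nodup) (hsS : s.Sublist S)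
    (hvio : ∀ t ∈ N, ¬ violates S t) {v : V} (hv : v ∈ S) (hvs : v ∉ s) :
    (prev v s S, v) ∉ Forb s N := by
  rintro ⟨⟨v1, v2, v3⟩, ht, rfl, hv1p, hpv3⟩
  set p := prev v2 s S
  have hps : p ∈ s := mem_of_prec_left hpv3
  have hv3 : v3 ∈ s := mem_of_prec_right hpv3
  have hne : prevList v2 s S ≠ [] := fun h =>
    hvs (by rwa [show p = v2 by simp [p, prev, hvs, h]] at hps)
  have hpv : prec p v2 S := ((mem_prevList_iff hS hv).mp (prev_mem_prevList hvs hne)).2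
  have hpv3S : prec p v3 S := List.Sublist.trans hpv3 hsS
  -- otherwise `v3 ⪯_S prev v2`, against `prev v2 ≺_s v3`
  have hvv3 : prec v2 v3 S := by
    refine (prec_total hv (mem_of_prec_right hpv3S) fun h => hvs (h ▸ hv3)).resolve_right
      fun hv3v => prec_irrefl hS (preceq_prec_trans hS ?_ hpv3S)
    exact preceq_prev hvs ((mem_prevList_iff hS hv).mpr ⟨hv3, hv3v⟩)
  have hv1v : prec v1 v2 S := preceq_prec_trans hS (preceq_of_sublist hv1p hsS) hpv
  exact hvio _ ht (triple_sublist_of_prec hS hv1v hvv3)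

lemma not_violates_of_prev_notMem_forb (hN : ∀ t ∈ N, prec t.1 t.2.2 s)
    (hok : ∀ t ∈ N, ¬ violates s t) (hS : S.Nodup) (hsS : s.Sublist S)
    (hforb : ∀ v ∈ S, v ∉ s → (prev v s S, v) ∉ Forb s N) :
    ∀ t ∈ N, ¬ violates S t := by
  rintro ⟨v1, v2, v3⟩ ht hvio
  have hv1 : v1 ∈ s := mem_of_prec_left (hN _ ht)
  have hv3 : v3 ∈ s := mem_of_prec_right (hN _ ht)
  have h12 : prec v1 v2 S := List.Sublist.trans (by simp) hvio
  have h23 : prec v2 v3 S := List.Sublist.trans (by simp) hvio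
  have hv2 : v2 ∈ S := mem_of_prec_right h12
  by_cases hv2s : v2 ∈ s
  · exact hok _ ht (triple_sublist_of_prec (hsS.nodup hS)
      (prec_of_sublist_of_mem hsS hS hv1 hv2s h12) (prec_of_sublist_of_mem hsS hS hv2s hv3 h23))
  have hv1p : v1 ∈ prevList v2 s S := (mem_prevList_iff hS hv2).mpr ⟨hv1, h12⟩
  obtain ⟨hps, hpv⟩ :=
    (mem_prevList_iff hS hv2).mp (prev_mem_prevList hv2s (List.ne_nil_of_mem hv1p))
  refine hforb v2 hv2 hv2s ⟨_, ht, rfl, ?_, ?_⟩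
  · exact (preceq_prev hv2s hv1p).imp_right (prec_of_sublist_of_mem hsS hS hv1 hps)
  · exact prec_of_sublist_of_mem hsS hS hps hv3 (prec_trans hS hpv h23)

end Encoding

theorem domain_encoding_general [DecidableEq V] (a w : V)
    (s : List V) (N : Set (V × V × V))
    (hN : ∀ t ∈ N, prec t.1 t.2.2 s)
    (hok : ∀ t ∈ N, ¬ violates s t) :
    DS a w s ∩ DN a w N =
      {S | S ∈ seqP a w ∧ s.Sublist S ∧
        ∀ v ∈ S, v ∉ s → (prev v s S, v) ∉ Forb s N} := by
  ext S
  simp only [DS, DN, Set.mem_inter_iff, Set.mem_ofPred_eq]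
  constructor
  · rintro ⟨⟨hP, hsS⟩, -, hvio⟩
    exact ⟨hP, hsS, fun v hv hvs => prev_notMem_forb_of_not_violates hP.1 hsS hvio hv hvs⟩
  · rintro ⟨hP, hsS, hforb⟩
    exact ⟨⟨hP, hsS⟩, hP, not_violates_of_prev_notMem_forb hN hok hP.1 hsS hforb⟩

theorem domain_encoding [DecidableEq V] (a w : V) (haw : a ≠ w)
    (s : List V) (hs : IsSeq a w s) (N : Set (V × V × V))
    (hN : ∀ t ∈ N, prec t.1 t.2.2 s)
    (hok : ∀ t ∈ N, ¬ violates s t) :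
    DS a w s ∩ DN a w N =
      {S | S ∈ seqP a w ∧ s.Sublist S ∧
        ∀ v ∈ S, v ∉ s → (prev v s S, v) ∉ Forb s N} :=
  domain_encoding_general a w s N hN hok
end

section
/- Let s be a duplicate-free list and N̂ a set of NotBetween triples such that every (v1, v2, v3) ∈ N̂ satisfies v1 ≺_s v3. Let v1* occur in s, let v2* not occur in s, and let s' be obtained from s by inserting v2* immediately after v1* (i.e., s = s1 ++ [v1*] ++ s2 and s' = s1 ++ [v1*, v2*] ++ s2). Then F(s', N̂) = F(s, N̂) ∪ {(v2*, w) | (v1*, w) ∈ F(s, N̂)}. -/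
variable {V : Type*}

/-! Inserting `v₂` right after `v₁` leaves the order of the old nodes unchanged, puts `v₂` after
exactly the nodes that are `⪯ v₁`, and before exactly the nodes that are `≻ v₁`. Since the end
points of every triple are old nodes, a pair `(x, w)` with `x` old is forbidden in the new list iff
it was forbidden in the old one, and `(v₂, w)` is forbidden iff `(v₁, w)` was. -/

theorem prec.left_mem {a b : V} {s : List V} (h : prec a b s) : a ∈ s :=
  h.subset (by simp)

theorem prec.right_mem {a b : V} {s : List V} (h : prec a b s) : b ∈ s :=
  h.subset (by simp)

theorem fst_mem_of_mem_forb {s : List V} {N : Set (V × V × V)} {p : V × V} (h : p ∈ Forb s N) :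
    p.1 ∈ s :=
  let ⟨_, _, _, _, hp⟩ := h
  hp.left_mem

namespace List

variable {α : Type*} {x : α} {L l₁ l₂ : List α}

theorem sublist_cons_iff_of_notMem (hx : x ∉ L) : L <+ x :: l₂ ↔ L <+ l₂ := by
  rw [sublist_cons_iff]
  constructor
  · rintro (h | ⟨r, rfl, -⟩)
    · exact h
    · simp at hx
  · exact Or.inl

theorem sublist_append_cons_iff_of_notMem (hx : x ∉ L) :
    L <+ l₁ ++ x :: l₂ ↔ L <+ l₁ ++ l₂ := by
  simp only [sublist_append_iff]
  constructor
  · rintro ⟨L₁, L₂, rfl, h₁, h₂⟩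
    exact ⟨L₁, L₂, rfl, h₁, (sublist_cons_iff_of_notMem (by simp_all)).1 h₂⟩
  · rintro ⟨L₁, L₂, rfl, h₁, h₂⟩
    exact ⟨L₁, L₂, rfl, h₁, h₂.cons x⟩

end List

section Insert

variable {a b x : V} {l₁ l₂ : List V}

theorem prec_append_cons_iff_of_ne (ha : a ≠ x) (hb : b ≠ x) :
    prec a b (l₁ ++ x :: l₂) ↔ prec a b (l₁ ++ l₂) :=
  List.sublist_append_cons_iff_of_notMem (by simp [ha.symm, hb.symm])

theorem preceq_append_cons_iff_of_ne (ha : a ≠ x) (hb : b ≠ x) :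
    preceq a b (l₁ ++ x :: l₂) ↔ preceq a b (l₁ ++ l₂) :=
  or_congr_right (prec_append_cons_iff_of_ne ha hb)

theorem prec_append_cons_right_iff (hb : b ∉ l₂) : prec a b (l₁ ++ b :: l₂) ↔ a ∈ l₁ := by
  unfold prec
  induction l₁ with
  | nil => simp [List.sublist_cons_iff, hb, mt List.Sublist.subset]
  | cons c l ih => simp [List.sublist_cons_iff, ih, eq_comm, or_comm]

theorem prec_append_cons_left_iff (ha : a ∉ l₁) : prec a b (l₁ ++ a :: l₂) ↔ b ∈ l₂ := by
  unfold prec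
  induction l₁ with
  | nil => simpa [List.sublist_cons_iff] using fun h : [a, b].Sublist l₂ => h.subset (by simp)
  | cons c l ih => simp_all [List.sublist_cons_iff, eq_comm]

end Insert

section InsertAfter

variable {s₁ s₂ : List V} {v₁ v₂ a b : V}

theorem append_pair_append : s₁ ++ [v₁, v₂] ++ s₂ = s₁ ++ [v₁] ++ v₂ :: s₂ := by simp

theorem prec_insert_after_iff_of_ne (ha : a ≠ v₂) (hb : b ≠ v₂) :
    prec a b (s₁ ++ [v₁, v₂] ++ s₂) ↔ prec a b (s₁ ++ [v₁] ++ s₂) := by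
  rw [append_pair_append, prec_append_cons_iff_of_ne ha hb]

theorem preceq_insert_after_iff_of_ne (ha : a ≠ v₂) (hb : b ≠ v₂) :
    preceq a b (s₁ ++ [v₁, v₂] ++ s₂) ↔ preceq a b (s₁ ++ [v₁] ++ s₂) :=
  or_congr_right (prec_insert_after_iff_of_ne ha hb)

theorem prec_insert_after_right_iff (hv₁ : v₁ ∉ s₁ ++ s₂) (hv₂ : v₂ ∉ s₁ ++ [v₁] ++ s₂) :
    prec a v₂ (s₁ ++ [v₁, v₂] ++ s₂) ↔ preceq a v₁ (s₁ ++ [v₁] ++ s₂) := by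
  rw [append_pair_append, prec_append_cons_right_iff (by simp_all), preceq, List.append_assoc,
    List.singleton_append, prec_append_cons_right_iff (by simp_all)]
  simp [or_comm]

theorem prec_insert_after_left_iff (hv₁ : v₁ ∉ s₁ ++ s₂) (hv₂ : v₂ ∉ s₁ ++ [v₁] ++ s₂) :
    prec v₂ b (s₁ ++ [v₁, v₂] ++ s₂) ↔ prec v₁ b (s₁ ++ [v₁] ++ s₂) := by
  rw [append_pair_append, prec_append_cons_left_iff (by simp_all), List.append_assoc,
    List.singleton_append, prec_append_cons_left_iff (by simp_all)]

variable {N : Set (V × V × V)} {x w : V}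

theorem mem_forb_insert_after_iff_of_ne (hN : ∀ t ∈ N, t.1 ≠ v₂ ∧ t.2.2 ≠ v₂) (hx : x ≠ v₂) :
    (x, w) ∈ Forb (s₁ ++ [v₁, v₂] ++ s₂) N ↔ (x, w) ∈ Forb (s₁ ++ [v₁] ++ s₂) N :=
  exists_congr fun t => and_congr_right fun ht => and_congr_right' <|
    and_congr (preceq_insert_after_iff_of_ne (hN t ht).1 hx)
      (prec_insert_after_iff_of_ne hx (hN t ht).2)

theorem mem_forb_insert_after_iff_inserted (hv₁ : v₁ ∉ s₁ ++ s₂) (hv₂ : v₂ ∉ s₁ ++ [v₁] ++ s₂)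
    (hN : ∀ t ∈ N, t.1 ≠ v₂) :
    (v₂, w) ∈ Forb (s₁ ++ [v₁, v₂] ++ s₂) N ↔ (v₁, w) ∈ Forb (s₁ ++ [v₁] ++ s₂) N :=
  exists_congr fun t => and_congr_right fun ht => and_congr_right' <|
    and_congr ((or_iff_right (hN t ht)).trans (prec_insert_after_right_iff hv₁ hv₂))
      (prec_insert_after_left_iff hv₁ hv₂)

end InsertAfter

theorem forb_after_insert (s1 s2 : List V) (v1 v2 : V)
    (hnd : (s1 ++ [v1] ++ s2).Nodup) (hv2 : v2 ∉ s1 ++ [v1] ++ s2)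
    (N : Set (V × V × V))
    (hN : ∀ t ∈ N, prec t.1 t.2.2 (s1 ++ [v1] ++ s2)) :
    Forb (s1 ++ [v1, v2] ++ s2) N =
      Forb (s1 ++ [v1] ++ s2) N ∪
        {p : V × V | p.1 = v2 ∧ (v1, p.2) ∈ Forb (s1 ++ [v1] ++ s2) N} := by
  have hv1 : v1 ∉ s1 ++ s2 := (List.nodup_cons.1 (List.nodup_middle.1 (by simpa using hnd))).1
  have hNold : ∀ t ∈ N, t.1 ≠ v2 ∧ t.2.2 ≠ v2 := fun t ht =>
    ⟨ne_of_mem_of_not_mem (hN t ht).left_mem hv2, ne_of_mem_of_not_mem (hN t ht).right_mem hv2⟩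
  ext ⟨x, w⟩
  rw [Set.mem_union, Set.mem_ofPred_eq]
  rcases eq_or_ne x v2 with rfl | hx
  · have hold : (x, w) ∉ Forb (s1 ++ [v1] ++ s2) N := fun h => hv2 (fst_mem_of_mem_forb h)
    rw [mem_forb_insert_after_iff_inserted hv1 hv2 fun t ht => (hNold t ht).1]
    simp only [hold, true_and, false_or]
  · rw [mem_forb_insert_after_iff_of_ne hNold hx]
    simp only [hx, false_and, or_false]
end

section
/- Let s be a duplicate-free list and N̂ a set of NotBetween triples such that every (v1, v2, v3) ∈ N̂ satisfies v1 ≺_s v3, and suppose s violates no triple of N̂. Let vi occur in s, let vj not occur in s, and let s' be obtained from s by inserting vj immediately after vi. Then s' violates some triple of N̂ if and only if (vi, vj) ∈ F(s, N̂). -/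
/-!
Both endpoints of every triple occur in `s` and `s` violates no triple, so a triple violated by
`s'` must have the new node `vj` as its middle node. As `vi` and `vj` each occur once in `s'`,
`[v1, vj, v3]` embeds into `s1 ++ vi :: vj :: s2` exactly when `v1 ∈ s1 ++ [vi]` and `v3 ∈ s2`,
which in `s` reads `v1 ⪯_s vi ≺_s v3`.
-/

variable {V : Type*}

namespace List

variable {α : Type*} {l l₁ l₂ p q : List α} {x : α}

theorem Sublist.of_append_cons_of_notMem (h : l <+ l₁ ++ x :: l₂) (hx : x ∉ l) :
    l <+ l₁ ++ l₂ := by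
  obtain ⟨m₁, m₂, rfl, hm₁, hm₂⟩ := sublist_append_iff.1 h
  rcases sublist_cons_iff.1 hm₂ with hm₂ | ⟨r, rfl, -⟩
  · exact hm₁.append hm₂
  · simp at hx

theorem append_cons_sublist_append_cons_iff (h₁ : x ∉ l₁) (h₂ : x ∉ l₂) :
    p ++ x :: q <+ l₁ ++ x :: l₂ ↔ p <+ l₁ ∧ q <+ l₂ := by
  refine ⟨fun h => ?_, fun ⟨hp, hq⟩ => hp.append (hq.cons_cons x)⟩
  obtain ⟨m₁, m₂, hpq, hm₁, hm₂⟩ := sublist_append_iff.1 h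
  rcases sublist_cons_iff.1 hm₂ with hm₂ | ⟨r, rfl, hr⟩
  · have hx : x ∈ m₁ ++ m₂ := hpq ▸ mem_append_right p mem_cons_self
    rcases mem_append.1 hx with hx | hx
    · exact (h₁ (hm₁.subset hx)).elim
    · exact (h₂ (hm₂.subset hx)).elim
  · obtain ⟨rfl, -, rfl⟩ :=
      (append_cons_inj_of_notMem (fun h => h₁ (hm₁.subset h)) fun h => h₂ (hr.subset h)).1 hpq.symm
    exact ⟨hm₁, hr⟩

end List

section SingleOccurrence

variable {l₁ l₂ : List V} {x : V}

theorem prec_iff_mem_left (h₁ : x ∉ l₁) (h₂ : x ∉ l₂) (a : V) :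
    prec a x (l₁ ++ x :: l₂) ↔ a ∈ l₁ := by
  simpa [prec] using List.append_cons_sublist_append_cons_iff (p := [a]) (q := []) h₁ h₂

theorem prec_iff_mem_right (h₁ : x ∉ l₁) (h₂ : x ∉ l₂) (b : V) :
    prec x b (l₁ ++ x :: l₂) ↔ b ∈ l₂ := by
  simpa [prec] using List.append_cons_sublist_append_cons_iff (p := []) (q := [b]) h₁ h₂

theorem preceq_iff_mem (h₁ : x ∉ l₁) (h₂ : x ∉ l₂) (a : V) :
    preceq a x (l₁ ++ x :: l₂) ↔ a ∈ l₁ ++ [x] := by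
  rw [preceq, prec_iff_mem_left h₁ h₂, List.mem_append, List.mem_singleton, or_comm]

theorem violates_iff_mem (h₁ : x ∉ l₁) (h₂ : x ∉ l₂) (a b : V) :
    violates (l₁ ++ x :: l₂) (a, x, b) ↔ a ∈ l₁ ∧ b ∈ l₂ := by
  simpa [violates] using List.append_cons_sublist_append_cons_iff (p := [a]) (q := [b]) h₁ h₂

end SingleOccurrence

theorem insert_violates_iff_forbidden (s1 s2 : List V) (vi vj : V)
    (hnd : (s1 ++ [vi] ++ s2).Nodup) (hvj : vj ∉ s1 ++ [vi] ++ s2)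
    (N : Set (V × V × V))
    (hN : ∀ t ∈ N, prec t.1 t.2.2 (s1 ++ [vi] ++ s2))
    (hok : ∀ t ∈ N, ¬ violates (s1 ++ [vi] ++ s2) t) :
    (∃ t ∈ N, violates (s1 ++ [vi, vj] ++ s2) t) ↔
      (vi, vj) ∈ Forb (s1 ++ [vi] ++ s2) N := by
  have hs : s1 ++ [vi] ++ s2 = s1 ++ vi :: s2 := by simp
  have hs' : s1 ++ [vi, vj] ++ s2 = s1 ++ [vi] ++ vj :: s2 := by simp
  have hvi : vi ∉ s1 ∧ vi ∉ s2 := by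
    rw [hs, List.nodup_middle, List.nodup_cons, List.mem_append] at hnd
    exact not_or.1 hnd.1
  have hvj' : vj ∉ s1 ++ [vi] ∧ vj ∉ s2 := by
    simpa [and_assoc] using hvj
  have hmid : ∀ t ∈ N, violates (s1 ++ [vi, vj] ++ s2) t → t.2.1 = vj := by
    intro t ht hv
    by_contra hne
    have hac := (hN t ht).subset
    refine hok t ht ((hs' ▸ hv).of_append_cons_of_notMem ?_)
    simp only [List.mem_cons, List.not_mem_nil, or_false, not_or]
    exact ⟨fun h => hvj (h ▸ hac (by simp)), Ne.symm hne, fun h => hvj (h ▸ hac (by simp))⟩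
  have hkey : ∀ a c, violates (s1 ++ [vi, vj] ++ s2) (a, vj, c) ↔
      preceq a vi (s1 ++ [vi] ++ s2) ∧ prec vi c (s1 ++ [vi] ++ s2) := by
    intro a c
    rw [hs', violates_iff_mem hvj'.1 hvj'.2, hs, preceq_iff_mem hvi.1 hvi.2,
      prec_iff_mem_right hvi.1 hvi.2]
  constructor
  · rintro ⟨⟨a, b, c⟩, ht, hv⟩
    obtain rfl : b = vj := hmid _ ht hv
    exact ⟨_, ht, rfl, (hkey a c).1 hv⟩
  · rintro ⟨⟨a, b, c⟩, ht, rfl, h⟩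
    exact ⟨_, ht, (hkey a c).2 h⟩
end

section
/- Let s be a duplicate-free list and N̂ a set of NotBetween triples such that every (v1, v2, v3) ∈ N̂ satisfies v1 ≺_s v3. Let vi occur in s, let vj not occur in s, and let s' be obtained from s by inserting vj immediately after vi. If (vi, vj) ∈ F(s, N̂), then D_S(s') ∩ D_N(N̂) = ∅, i.e., performing a forbidden insertion results in a domain wipeout. -/
variable {V : Type*}

/-! Since `vi` occurs only once in `s`, a triple `(v1, vj, v3) ∈ N̂` witnessing the forbidden
insertion has `v1` in `s1 ++ [vi]` and `v3` in `s2`. Hence `[v1, vj, v3]` is a sublist of `s'`,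
so every `S ∈ D_S(s')` violates that triple. -/

namespace List

variable {α : Type*} {a b : α} {l₁ l₂ m : List α}

theorem Sublist.of_cons_sublist_append_of_notMem (ha : a ∉ l₁)
    (h : (a :: m).Sublist (l₁ ++ l₂)) : (a :: m).Sublist l₂ := by
  induction l₁ with
  | nil => exact h
  | cons c l₁ ih =>
    rw [mem_cons, not_or] at ha
    exact ih ha.2 (h.of_cons_of_ne ha.1)

theorem mem_of_pair_sublist_append_cons (ha : a ∉ l₁)
    (h : [a, b].Sublist (l₁ ++ a :: l₂)) : b ∈ l₂ :=
  singleton_sublist.mp (cons_sublist_cons.mp (h.of_cons_sublist_append_of_notMem ha))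

theorem mem_of_pair_sublist_append_cons' (ha : a ∉ l₂)
    (h : [b, a].Sublist (l₁ ++ a :: l₂)) : b ∈ l₁ := by
  rw [← reverse_sublist] at h
  simpa using mem_of_pair_sublist_append_cons (l₁ := l₂.reverse) (l₂ := l₁.reverse)
    (by simpa using ha) (by simpa using h)

end List

theorem exists_violates_insert_of_mem_forb {s₁ s₂ : List V} {vi vj : V} {N : Set (V × V × V)}
    (h₁ : vi ∉ s₁) (h₂ : vi ∉ s₂) (hF : (vi, vj) ∈ Forb (s₁ ++ [vi] ++ s₂) N) :
    ∃ t ∈ N, violates (s₁ ++ [vi, vj] ++ s₂) t := by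
  obtain ⟨⟨v₁, v₂, v₃⟩, ht, rfl, hv₁, hv₃⟩ := hF
  have hv₁ : v₁ ∈ s₁ ++ [vi] := by
    rcases hv₁ with rfl | hv₁
    · simp
    · exact List.mem_append_left _
        (List.mem_of_pair_sublist_append_cons' h₂ (by simpa [prec] using hv₁))
  have hv₃ : v₃ ∈ s₂ := List.mem_of_pair_sublist_append_cons h₁ (by simpa [prec] using hv₃)
  refine ⟨_, ht, ?_⟩
  simpa [violates] using (List.singleton_sublist.mpr hv₁).append
    ((List.Sublist.refl [v₂]).append (List.singleton_sublist.mpr hv₃))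

theorem forbidden_insertion_wipeout_general (a w : V)
    (s1 s2 : List V) (vi vj : V)
    (hnd : (s1 ++ [vi] ++ s2).Nodup)
    (N : Set (V × V × V))
    (hF : (vi, vj) ∈ Forb (s1 ++ [vi] ++ s2) N) :
    DS a w (s1 ++ [vi, vj] ++ s2) ∩ DN a w N = ∅ := by
  obtain ⟨⟨h₁, h₂⟩, -⟩ : (vi ∉ s1 ∧ vi ∉ s2) ∧ (s1 ++ s2).Nodup := by
    simpa [List.nodup_middle] using hnd
  obtain ⟨t, ht, hviol⟩ := exists_violates_insert_of_mem_forb h₁ h₂ hF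
  refine Set.eq_empty_of_forall_notMem fun S ⟨⟨_, hsub⟩, _, hfree⟩ => hfree t ht ?_
  exact hviol.trans hsub

theorem forbidden_insertion_wipeout (a w : V) (haw : a ≠ w)
    (s1 s2 : List V) (vi vj : V)
    (hnd : (s1 ++ [vi] ++ s2).Nodup) (hvj : vj ∉ s1 ++ [vi] ++ s2)
    (N : Set (V × V × V))
    (hN : ∀ t ∈ N, prec t.1 t.2.2 (s1 ++ [vi] ++ s2))
    (hF : (vi, vj) ∈ Forb (s1 ++ [vi] ++ s2) N) :
    DS a w (s1 ++ [vi, vj] ++ s2) ∩ DN a w N = ∅ :=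
  forbidden_insertion_wipeout_general a w s1 s2 vi vj hnd N hF
end

section
/- Let X be a set of nodes with α ∉ X and ω ∉ X. Then D_X(X) = D_N({(α, v, ω) | v ∈ X}); that is, a sequence from α to ω avoids every node of X if and only if it violates no NotBetween triple of the form (α, v, ω) with v ∈ X. -/
variable {V : Type*}

/-- Excluded-nodes subdomain. -/
def DX (a w : V) (X : Set V) : Set (List V) := {S ∈ seqP a w | ∀ v ∈ X, v ∉ S}

theorem List.triple_sublist_of_head?_of_getLast? {S : List V} {a v w : V}
    (ha : S.head? = some a) (hw : S.getLast? = some w) (hv : v ∈ S) (hva : v ≠ a)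
    (hvw : v ≠ w) : [a, v, w].Sublist S := by
  obtain ⟨U, rfl⟩ := List.getLast?_eq_some_iff.mp hw
  have hvU : v ∈ U := by simpa [hvw] using hv
  cases U with
  | nil => simp at hvU
  | cons b U' =>
    obtain rfl : b = a := by simpa using ha
    have hvU' : v ∈ U' := by simpa [hva] using hvU
    exact ((List.singleton_sublist.mpr hvU').append (.refl [w])).cons_cons _

theorem exclusion_as_notBetween_general (a w : V)
    (X : Set V) (haX : a ∉ X) (hwX : w ∉ X) :
    DX a w X = DN a w {t : V × V × V | ∃ v ∈ X, t = (a, v, w)} := by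
  ext S
  simp only [DX, DN, Set.mem_ofPred_eq]
  refine and_congr_right fun hS => ⟨?_, ?_⟩
  · rintro hX _ ⟨v, hv, rfl⟩ hviol
    exact hX v hv (hviol.subset (by simp))
  · intro hN v hv hvS
    exact hN _ ⟨v, hv, rfl⟩ <| List.triple_sublist_of_head?_of_getLast? hS.2.1 hS.2.2 hvS
      (ne_of_mem_of_not_mem hv haX) (ne_of_mem_of_not_mem hv hwX)

theorem exclusion_as_notBetween (a w : V) (haw : a ≠ w)
    (X : Set V) (haX : a ∉ X) (hwX : w ∉ X) :
    DX a w X = DN a w {t : V × V × V | ∃ v ∈ X, t = (a, v, w)} :=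
  exclusion_as_notBetween_general a w X haX hwX
end

section
/- Let d : V → V → ℝ satisfy the triangle inequality. If s and S are duplicate-free lists with the same (existing) first element and the same last element, and s is a subsequence of S, then pathLength(s) ≤ pathLength(S). In particular, the travel length of a partial sequence is a lower bound on the travel length of every sequence in D_S(s) with the same endpoints. -/
/-!
Deleting an interior vertex `b` from a walk `… a b c …` replaces `d a b + d b c` by the shorter
`d a c`. A sublist with the same endpoints arises from `S` by such deletions, together with
cutting off closed loops `a … a`, whose length is at least `d a a ≥ 0`
(the triangle inequality at `a = b = c`).
-/

variable {V : Type*}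

/-- The travel length of a path: sum of `d` over consecutive pairs. -/
def pathLength (d : V → V → ℝ) : List V → ℝ
  | a :: b :: rest => d a b + pathLength d (b :: rest)
  | _ => 0

section

variable {d : V → V → ℝ}

@[simp]
lemma pathLength_cons_cons (a b : V) (l : List V) :
    pathLength d (a :: b :: l) = d a b + pathLength d (b :: l) := rfl

@[simp]
lemma pathLength_singleton (a : V) : pathLength d [a] = 0 := rfl

lemma pathLength_cons_le_of_sublist (htri : ∀ a b c : V, d a c ≤ d a b + d b c)
    {s S : List V} (hsub : s.Sublist S) (a : V) (hlast : (a :: s).getLast? = (a :: S).getLast?) :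
    pathLength d (a :: s) ≤ pathLength d (a :: S) := by
  induction hsub generalizing a with
  | slnil => rfl
  | @cons s S b hsub ih =>
    cases S with
    | nil =>
      obtain rfl := List.sublist_nil.mp hsub
      obtain rfl : a = b := by simpa using hlast
      simp only [pathLength_singleton, pathLength_cons_cons]
      linarith [htri a a a]
    | cons c S =>
      calc pathLength d (a :: s) ≤ pathLength d (a :: c :: S) := ih a (by simpa using hlast)
        _ ≤ pathLength d (a :: b :: c :: S) := by
          simp only [pathLength_cons_cons]
          linarith [htri a b c]
  | @cons_cons s S c _ ih =>
    simpa using ih c (by simpa using hlast)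

end

theorem sublist_pathLength_le_general (d : V → V → ℝ)
    (htri : ∀ a b c : V, d a c ≤ d a b + d b c)
    (s S : List V) (hsub : s.Sublist S)
    (hhead : s.head? = S.head?) (hlast : s.getLast? = S.getLast?) :
    pathLength d s ≤ pathLength d S := by
  cases s with
  | nil =>
    obtain rfl : S = [] := by simpa [eq_comm] using hhead
    rfl
  | cons a s =>
    obtain ⟨S, rfl⟩ : ∃ S', S = a :: S' := by cases S <;> simp_all
    exact pathLength_cons_le_of_sublist htri (List.cons_sublist_cons.mp hsub) a hlast

theorem sublist_pathLength_le (d : V → V → ℝ)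
    (htri : ∀ a b c : V, d a c ≤ d a b + d b c)
    (s S : List V) (hs : s.Nodup) (hS : S.Nodup) (hsub : s.Sublist S)
    (hne : s ≠ [])
    (hhead : s.head? = S.head?) (hlast : s.getLast? = S.getLast?) :
    pathLength d s ≤ pathLength d S :=
  sublist_pathLength_le_general d htri s S hsub hhead hlast
end

section
/- Let d : V → V → ℝ satisfy the triangle inequality. Let s = s1 ++ [vi, vk] ++ s2 be a duplicate-free list in which vi and vk are consecutive, let vj be a node not occurring in s, and let s' = s1 ++ [vi, vj, vk] ++ s2 be the result of inserting vj between vi and vk. Then pathLength(s') = pathLength(s) + (d vi vj + d vj vk − d vi vk), and for every duplicate-free list S with the same first and last elements as s such that s' is a subsequence of S, pathLength(S) ≥ pathLength(s) + (d vi vj + d vj vk − d vi vk). -/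
variable {V : Type*}

/-!
Inserting `vj` replaces the edge `vi → vk` by `vi → vj → vk`, which gives the identity. For the
bound, `S` runs through the nodes of the augmented path in order and between the same endpoints;
by the triangle inequality, short-cutting each node of `S` not on that path never increases the
length, so the augmented path is no longer than `S`.
-/

theorem List.exists_eq_cons_append_singleton {α : Type*} {l : List α} (hl : 2 ≤ l.length) :
    ∃ a m b, l = a :: (m ++ [b]) := by
  obtain ⟨a, t, rfl⟩ := List.exists_cons_of_length_pos (by omega : 0 < l.length)
  rcases t.eq_nil_or_concat with rfl | ⟨m, b, rfl⟩
  · simp at hl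
  · exact ⟨a, m, b, by simp⟩

namespace pathLength

variable (d : V → V → ℝ)

@[simp]
theorem singleton (a : V) : pathLength d [a] = 0 := rfl

@[simp]
theorem cons_cons (a b : V) (l : List V) :
    pathLength d (a :: b :: l) = d a b + pathLength d (b :: l) := rfl

theorem append_cons (l₁ : List V) (a : V) (l₂ : List V) :
    pathLength d (l₁ ++ a :: l₂) = pathLength d (l₁ ++ [a]) + pathLength d (a :: l₂) := by
  induction l₁ with
  | nil => simp
  | cons x l₁ ih =>
    cases l₁ with
    | nil => simp
    | cons y l₁ =>
      simp only [List.cons_append, cons_cons] at ih ⊢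
      rw [ih]; ring

theorem insert_eq_add (l₁ : List V) (a c b : V) (l₂ : List V) :
    pathLength d (l₁ ++ a :: c :: b :: l₂) =
      pathLength d (l₁ ++ a :: b :: l₂) + (d a c + d c b - d a b) := by
  rw [append_cons d l₁ a (c :: b :: l₂), append_cons d l₁ a (b :: l₂)]
  simp only [cons_cons]
  ring

variable {d}

theorem cons_le_cons_cons (htri : ∀ a b c : V, d a c ≤ d a b + d b c) (a x : V)
    {l : List V} (hl : l ≠ []) :
    pathLength d (a :: l) ≤ pathLength d (a :: x :: l) := by
  obtain ⟨y, l, rfl⟩ := List.exists_cons_of_ne_nil hl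
  simp only [cons_cons]
  linarith [htri a x y]

theorem cons_append_singleton_le_of_sublist (htri : ∀ a b c : V, d a c ≤ d a b + d b c)
    {m M : List V} (h : m.Sublist M) (a b : V) :
    pathLength d (a :: (m ++ [b])) ≤ pathLength d (a :: (M ++ [b])) := by
  induction h generalizing a with
  | slnil => rfl
  | @cons m M x _ ih =>
    calc pathLength d (a :: (m ++ [b]))
        ≤ pathLength d (a :: x :: (m ++ [b])) := cons_le_cons_cons htri a x (by simp)
      _ ≤ pathLength d (a :: x :: (M ++ [b])) := by simp only [cons_cons]; grw [ih x]
  | cons_cons x _ ih =>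
    simp only [List.cons_append, cons_cons]
    grw [ih x]

theorem le_of_sublist (htri : ∀ a b c : V, d a c ≤ d a b + d b c) {l L : List V}
    (h : l.Sublist L) (hhead : l.head? = L.head?) (hlast : l.getLast? = L.getLast?)
    (hl : 2 ≤ l.length) : pathLength d l ≤ pathLength d L := by
  obtain ⟨a, m, b, rfl⟩ := List.exists_eq_cons_append_singleton hl
  obtain ⟨a', M, b', rfl⟩ := List.exists_eq_cons_append_singleton (hl.trans h.length_le)
  obtain rfl : a = a' := by simpa using hhead
  obtain rfl : b = b' := by
    simpa only [← List.cons_append, List.getLast?_concat, Option.some.injEq] using hlast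
  exact cons_append_singleton_le_of_sublist htri
    ((List.append_sublist_append_right _).mp (List.cons_sublist_cons.mp h)) a b

end pathLength

theorem insertion_detour_cost_general (d : V → V → ℝ)
    (htri : ∀ a b c : V, d a c ≤ d a b + d b c)
    (s1 s2 : List V) (vi vj vk : V) :
    pathLength d (s1 ++ [vi, vj, vk] ++ s2) =
      pathLength d (s1 ++ [vi, vk] ++ s2) + (d vi vj + d vj vk - d vi vk) ∧
    ∀ S : List V, S.Nodup → (s1 ++ [vi, vj, vk] ++ s2).Sublist S →
      S.head? = (s1 ++ [vi, vk] ++ s2).head? →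
      S.getLast? = (s1 ++ [vi, vk] ++ s2).getLast? →
      pathLength d (s1 ++ [vi, vk] ++ s2) + (d vi vj + d vj vk - d vi vk) ≤
        pathLength d S := by
  have hcost : pathLength d (s1 ++ [vi, vj, vk] ++ s2) =
      pathLength d (s1 ++ [vi, vk] ++ s2) + (d vi vj + d vj vk - d vi vk) := by
    simpa using pathLength.insert_eq_add d s1 vi vj vk s2
  refine ⟨hcost, fun S _ hsub hhead hlast => hcost ▸ pathLength.le_of_sublist htri hsub ?_ ?_ ?_⟩
  · rw [hhead]; cases s1 <;> rfl
  · rw [hlast]; simp [List.getLast?_append]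
  · simp only [List.length_append, List.length_cons]; omega

theorem insertion_detour_cost (d : V → V → ℝ)
    (htri : ∀ a b c : V, d a c ≤ d a b + d b c)
    (s1 s2 : List V) (vi vj vk : V)
    (hnd : (s1 ++ [vi, vk] ++ s2).Nodup)
    (hvj : vj ∉ s1 ++ [vi, vk] ++ s2) :
    pathLength d (s1 ++ [vi, vj, vk] ++ s2) =
      pathLength d (s1 ++ [vi, vk] ++ s2) + (d vi vj + d vj vk - d vi vk) ∧
    ∀ S : List V, S.Nodup → (s1 ++ [vi, vj, vk] ++ s2).Sublist S →
      S.head? = (s1 ++ [vi, vk] ++ s2).head? →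
      S.getLast? = (s1 ++ [vi, vk] ++ s2).getLast? →
      pathLength d (s1 ++ [vi, vk] ++ s2) + (d vi vj + d vj vk - d vi vk) ≤
        pathLength d S :=
  insertion_detour_cost_general d htri s1 s2 vi vj vk
end

section
/- Let A be a finite set of activities, each i ∈ A having a start node sA i, an end node eA i, and a nonnegative load l i, and let c be a capacity. Let S be a duplicate-free list satisfying the cumulative condition: for every element v of S, the sum of l i over all i ∈ A with sA i ⪯_S v and v ≺_S eA i is at most c. If s is a subsequence of S, then for every element v of s, the sum of l i over the fully inserted activities straddling v in s — namely all i ∈ A such that sA i and eA i occur in s, sA i ⪯_s v, and v ≺_s eA i — is at most c. In other words, the load profile computed from the fully inserted activities is a valid lower bound in every completion of the partial sequence. -/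
variable {V : Type*} {I : Type*}

theorem prec.mono {a b : V} {s S : List V} (h : prec a b s) (hsub : s.Sublist S) :
    prec a b S :=
  List.Sublist.trans h hsub

theorem preceq.mono {a b : V} {s S : List V} (h : preceq a b s) (hsub : s.Sublist S) :
    preceq a b S :=
  h.imp_right (prec.mono · hsub)

open scoped Classical in
theorem cumulative_load_profile_lower_bound_general
    (A : Finset I) (sA eA : I → V) (l : I → ℝ) (hl : ∀ i, 0 ≤ l i) (c : ℝ)
    (S : List V)
    (hcum : ∀ v ∈ S,
      (∑ i ∈ A.filter (fun i => preceq (sA i) v S ∧ prec v (eA i) S), l i) ≤ c)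
    (s : List V) (hsub : s.Sublist S) :
    ∀ v ∈ s,
      (∑ i ∈ A.filter (fun i =>
          sA i ∈ s ∧ eA i ∈ s ∧ preceq (sA i) v s ∧ prec v (eA i) s), l i) ≤ c := by
  intro v hv
  have straddling_subset :
      A.filter (fun i => sA i ∈ s ∧ eA i ∈ s ∧ preceq (sA i) v s ∧ prec v (eA i) s) ⊆
        A.filter (fun i => preceq (sA i) v S ∧ prec v (eA i) S) :=
    Finset.monotone_filter_right A fun _ _ ⟨_, _, hle, hlt⟩ => ⟨hle.mono hsub, hlt.mono hsub⟩
  calc _ ≤ ∑ i ∈ A.filter (fun i => preceq (sA i) v S ∧ prec v (eA i) S), l i :=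
        Finset.sum_le_sum_of_subset_of_nonneg straddling_subset fun i _ _ => hl i
    _ ≤ c := hcum v (hsub.subset hv)

open scoped Classical in
theorem cumulative_load_profile_lower_bound
    (A : Finset I) (sA eA : I → V) (l : I → ℝ) (hl : ∀ i, 0 ≤ l i) (c : ℝ)
    (S : List V) (hS : S.Nodup)
    (hcum : ∀ v ∈ S,
      (∑ i ∈ A.filter (fun i => preceq (sA i) v S ∧ prec v (eA i) S), l i) ≤ c)
    (s : List V) (hsub : s.Sublist S) :
    ∀ v ∈ s,
      (∑ i ∈ A.filter (fun i =>
          sA i ∈ s ∧ eA i ∈ s ∧ preceq (sA i) v s ∧ prec v (eA i) s), l i) ≤ c :=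
  cumulative_load_profile_lower_bound_general A sA eA l hl c S hcum s hsub
end

section
/- Let v be a node, let L1 and L2 be duplicate-free lists in which v does not occur, and let i1 ≤ length(L1) and i2 ≤ length(L2) be insertion positions. If inserting v at position i1 in L1 yields the same list as inserting v at position i2 in L2 (List.insertIdx), then L1 = L2 and i1 = i2. Consequently, the two-step node branching — which fixes a node and branches once on each of its feasible insertion positions — generates pairwise distinct sequences, so the corresponding search spaces are disjoint. -/
/-! When `v ∉ L`, the inserted `v` is the first occurrence of `v` in `L.insertIdx i v`, so the
position `i` is read off the common list as the index of `v`; once the positions agree, the lists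
agree because insertion at a fixed position is injective. -/

namespace List

variable {α : Type*} [BEq α] [LawfulBEq α] {a : α}

theorem idxOf_insertIdx_of_notMem :
    ∀ {l : List α} {i : ℕ}, a ∉ l → i ≤ l.length → (l.insertIdx i a).idxOf a = i
  | _, 0, _, _ => by rw [insertIdx_zero, idxOf_cons_self]
  | b :: l, i + 1, ha, hi => by
    rw [mem_cons, not_or] at ha
    rw [insertIdx_succ_cons, idxOf_cons_ne _ (Ne.symm ha.1),
      idxOf_insertIdx_of_notMem ha.2 (Nat.le_of_succ_le_succ hi)]

end List

variable {V : Type*}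

theorem insertIdx_injective (v : V) (L1 L2 : List V)
    (hv1 : v ∉ L1) (hv2 : v ∉ L2)
    (i1 i2 : ℕ) (hi1 : i1 ≤ L1.length) (hi2 : i2 ≤ L2.length)
    (heq : L1.insertIdx i1 v = L2.insertIdx i2 v) :
    L1 = L2 ∧ i1 = i2 := by
  classical
  obtain rfl : i1 = i2 := by
    rw [← List.idxOf_insertIdx_of_notMem hv1 hi1, heq, List.idxOf_insertIdx_of_notMem hv2 hi2]
  exact ⟨List.insertIdx_injective i1 v heq, rfl⟩
end

section
/- Let s be a sequence (a duplicate-free list with first element α and last element ω) that violates no NotBetween triple of N, let R be a set of required nodes each of which occurs in s, and let X be a set of nodes disjoint from the elements of s such that every node of V either occurs in s or belongs to X. Then D(R, X, s, N) = {s}; that is, the sequence domain is fixed with s as its unique element. -/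
variable {V : Type*}

/-- Required-nodes subdomain. -/
def DR (a w : V) (R : Set V) : Set (List V) := {S ∈ seqP a w | ∀ v ∈ R, v ∈ S}

/-- The sequence domain. -/
def Dom (a w : V) (R X : Set V) (s : List V) (N : Set (V × V × V)) : Set (List V) :=
  DR a w R ∩ DX a w X ∩ DS a w s ∩ DN a w N

/-!
The nodes excluded by `X` leave only the nodes of `s` available, so any member `S` of the
domain is a duplicate-free list drawn from the elements of `s`, hence no longer than `s`;
since `s` is a sublist of `S`, the two lists coincide.
-/

theorem List.Sublist.eq_of_subset_of_nodup {s S : List V} (h : s.Sublist S) (hS : S.Nodup)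
    (hSs : S ⊆ s) : s = S :=
  h.eq_of_length (le_antisymm h.length_le (List.subperm_of_subset hS hSs).length_le)

theorem self_mem_Dom {a w : V} {s : List V} (hs : IsSeq a w s) {N : Set (V × V × V)}
    (hok : ∀ t ∈ N, ¬ violates s t) {R X : Set V} (hR : ∀ v ∈ R, v ∈ s)
    (hX : ∀ v ∈ X, v ∉ s) : s ∈ Dom a w R X s N :=
  ⟨⟨⟨⟨hs, hR⟩, hs, hX⟩, hs, List.Sublist.refl s⟩, hs, hok⟩

theorem eq_of_mem_Dom {a w : V} {s S : List V} {N : Set (V × V × V)} {R X : Set V}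
    (hcover : ∀ v : V, v ∈ s ∨ v ∈ X) (hS : S ∈ Dom a w R X s N) : S = s := by
  obtain ⟨⟨⟨-, hSseq, hSX⟩, -, hsub⟩, -⟩ := hS
  have hSs : S ⊆ s := fun v hv => (hcover v).resolve_right fun hvX => hSX v hvX hv
  exact (hsub.eq_of_subset_of_nodup hSseq.1 hSs).symm

theorem fixed_domain_general (a w : V)
    (s : List V) (hs : IsSeq a w s)
    (N : Set (V × V × V)) (hok : ∀ t ∈ N, ¬ violates s t)
    (R X : Set V)
    (hR : ∀ v ∈ R, v ∈ s) (hX : ∀ v ∈ X, v ∉ s)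
    (hcover : ∀ v : V, v ∈ s ∨ v ∈ X) :
    Dom a w R X s N = {s} :=
  Set.eq_singleton_iff_unique_mem.mpr
    ⟨self_mem_Dom hs hok hR hX, fun _ hS => eq_of_mem_Dom hcover hS⟩

theorem fixed_domain [Fintype V] (a w : V) (haw : a ≠ w)
    (s : List V) (hs : IsSeq a w s)
    (N : Set (V × V × V)) (hok : ∀ t ∈ N, ¬ violates s t)
    (R X : Set V)
    (hR : ∀ v ∈ R, v ∈ s) (hX : ∀ v ∈ X, v ∉ s)
    (hcover : ∀ v : V, v ∈ s ∨ v ∈ X) :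
    Dom a w R X s N = {s} :=
  fixed_domain_general a w s hs N hok R X hR hX hcover
end
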